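/- arXiv:1206.1372 — 3 statements merged into one kernel-verified Lean document; each statement's English description precedes it below -/
import Mathlib

section
/- Let U ⊆ ℝⁿ be open, let g : U → (ℝⁿ →ₗ ℝⁿ →ₗ ℝ) be a smooth map such that each g(q) is a symmetric nondegenerate bilinear form, with matrix entries g_{ij}(q), inverse matrix entries g^{lk}(q), and Christoffel symbols Γˡ_{ij}(q) = (1/2) Σ_k g^{lk}(q)(∂g_{jk}/∂qⁱ + ∂g_{ik}/∂qʲ − ∂g_{ij}/∂qᵏ)(q). Define on U × ℝⁿ the Liouville 1-form θ(q,v)(x,y) = Σ_{j,k} g_{jk}(q) vᵏ xʲ, the symplectic 2-form ω₂(p)(X,Y) = (Dθ(p)X)(Y) − (Dθ(p)Y)(X) (coordinate exterior derivative of θ, D denoting the Fréchet derivative), and the kinetic energy T(q,v) = (1/2) Σ_{i,j} g_{ij}(q) vⁱ vʲ. Let f : U × ℝⁿ → ℝⁿ be smooth, let D be the vector field D(q,v) = (v, f(q,v)) on U × ℝⁿ, let α : U × ℝⁿ → (ℝⁿ)* be a map, and let α̂ be its horizontal lift α̂(q,v)(x,y) = α(q,v)(x). Then the Newton–Lagrange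 equation i_D ω₂ + dT + α̂ = 0 holds at every point of U × ℝⁿ (where dT is the Fréchet derivative of T and i_D ω₂ (p) = ω₂(p)(D(p), ·)) if and only if for all (q,v) ∈ U × ℝⁿ and all l, fˡ(q,v) = −( Σ_k g^{lk}(q) α_k(q,v) + Σ_{i,j} Γˡ_{ij}(q) vⁱ vʲ ), where α_k(q,v) = α(q,v)(e_k) are the components of α. -/
/- Tangent bundle of an open set `U ⊆ ℝⁿ` is `U × ℝⁿ`; points are `(q, v)`. -/

/-- The `i`-th standard basis vector of `ℝⁿ`. -/
noncomputable def basisVec {n : ℕ} (i : Fin n) : Fin n → ℝ := Pi.single i 1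

/-- The Christoffel symbols `Γˡ_{ij}(q) = (1/2) Σ_k g^{lk}(q) (∂_i g_{jk} + ∂_j g_{ik} − ∂_k g_{ij})(q)`
of a metric `g` with inverse coefficients `ginv`. -/
noncomputable def christoffel {n : ℕ}
    (g : (Fin n → ℝ) → ((Fin n → ℝ) →L[ℝ] (Fin n → ℝ) →L[ℝ] ℝ))
    (ginv : (Fin n → ℝ) → Fin n → Fin n → ℝ)
    (l i j : Fin n) (q : Fin n → ℝ) : ℝ :=
  (1/2) * ∑ k, ginv q l k *
    (fderiv ℝ (fun p => g p (basisVec j) (basisVec k)) q (basisVec i)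
      + fderiv ℝ (fun p => g p (basisVec i) (basisVec k)) q (basisVec j)
      - fderiv ℝ (fun p => g p (basisVec i) (basisVec j)) q (basisVec k))

/-- The kinetic energy `T(q,v) = (1/2) g(q)(v,v)` on `U × ℝⁿ`. -/
noncomputable def kineticEnergy {n : ℕ}
    (g : (Fin n → ℝ) → ((Fin n → ℝ) →L[ℝ] (Fin n → ℝ) →L[ℝ] ℝ)) :
    (Fin n → ℝ) × (Fin n → ℝ) → ℝ :=
  fun p => (1/2) * g p.1 p.2 p.2

/-- The Liouville 1-form `θ(q,v)(x,y) = g(q)(v,x)` on `U × ℝⁿ`. -/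
noncomputable def liouville {n : ℕ}
    (g : (Fin n → ℝ) → ((Fin n → ℝ) →L[ℝ] (Fin n → ℝ) →L[ℝ] ℝ)) :
    (Fin n → ℝ) × (Fin n → ℝ) → (((Fin n → ℝ) × (Fin n → ℝ)) →L[ℝ] ℝ) :=
  fun p => (g p.1 p.2).comp (ContinuousLinearMap.fst ℝ (Fin n → ℝ) (Fin n → ℝ))

/-- The symplectic form `ω₂ = dθ` : `ω₂(p)(X,Y) = (Dθ(p)X)(Y) − (Dθ(p)Y)(X)`. -/
noncomputable def omega2 {n : ℕ}
    (g : (Fin n → ℝ) → ((Fin n → ℝ) →L[ℝ] (Fin n → ℝ) →L[ℝ] ℝ))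
    (p X Y : (Fin n → ℝ) × (Fin n → ℝ)) : ℝ :=
  fderiv ℝ (liouville g) p X Y - fderiv ℝ (liouville g) p Y X

/-!
Differentiating `θ(q,v) = g(q)(v, ·)` and `T(q,v) = ½ g(q)(v,v)` at `(q,v)`, the terms of
`i_D ω₂ + dT` that involve the fibre component of the test vector cancel by the symmetry of
`g(q)`. What is left is the covector
`x ↦ Dg(q)(v)(v)(x) + g(q)(f, x) + α(x) − ½ Dg(q)(x)(v,v)` on `ℝⁿ`,
whose `k`-th component is `(G f)_k + α_k + Σ_{ij} Γ_{kij} vⁱ vʲ`, with `G = (g_{ij}(q))` and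
`Γ_{kij}` the Christoffel symbols of the first kind. So the equation reads `G f = −(α + Γ(v,v))`,
and multiplying by `G⁻¹ = (g^{lk}(q))` gives the coordinate formula.
-/

open scoped Matrix

section

variable {𝕜 E F G : Type*} [NontriviallyNormedField 𝕜]
  [NormedAddCommGroup E] [NormedSpace 𝕜 E] [NormedAddCommGroup F] [NormedSpace 𝕜 F]
  [NormedAddCommGroup G] [NormedSpace 𝕜 G]

theorem HasFDerivAt.clm_apply_prod {g : E → F →L[𝕜] G} {g' : E →L[𝕜] F →L[𝕜] G} {x : E}
    (hg : HasFDerivAt g g' x) (y : F) :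
    HasFDerivAt (fun p : E × F => g p.1 p.2)
      ((g x).comp (ContinuousLinearMap.snd 𝕜 E F)
        + (g'.comp (ContinuousLinearMap.fst 𝕜 E F)).flip y) (x, y) :=
  HasFDerivAt.clm_apply (c := fun p : E × F => g p.1) (u := Prod.snd)
    (hg.comp (x, y) hasFDerivAt_fst) hasFDerivAt_snd

theorem fderiv_clm_apply_apply_const {H : Type*} [NormedAddCommGroup H] [NormedSpace 𝕜 H]
    {g : E → F →L[𝕜] G →L[𝕜] H} {x : E} (hg : DifferentiableAt 𝕜 g x) (u : F) (w : G) (y : E) :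
    fderiv 𝕜 (fun p => g p u w) x y = fderiv 𝕜 g x y u w := by
  rw [((hg.hasFDerivAt.clm_apply (hasFDerivAt_const u x)).clm_apply
    (hasFDerivAt_const w x)).fderiv]
  simp

end

theorem Matrix.mulVec_add_eq_zero_iff {ι R : Type*} [Fintype ι] [DecidableEq ι] [CommRing R]
    {A B : Matrix ι ι R} (hAB : A * B = 1) (x c : ι → R) :
    A *ᵥ x + c = 0 ↔ x = -(B *ᵥ c) := by
  have hBA : B * A = 1 := mul_eq_one_comm.mp hAB
  constructor
  · intro h
    calc x = B *ᵥ (A *ᵥ x) := by rw [mulVec_mulVec, hBA, one_mulVec]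
      _ = -(B *ᵥ c) := by rw [eq_neg_of_add_eq_zero_left h, mulVec_neg]
  · rintro rfl
    rw [mulVec_neg, mulVec_mulVec, hAB, one_mulVec, neg_add_cancel]

section

variable {n : ℕ}

theorem ContinuousLinearMap.apply_eq_sum_basisVec {M : Type*} [AddCommMonoid M] [Module ℝ M]
    [TopologicalSpace M] (φ : (Fin n → ℝ) →L[ℝ] M) (x : Fin n → ℝ) :
    φ x = ∑ i, x i • φ (basisVec i) := by
  conv_lhs => rw [← Finset.univ_sum_single x]
  refine (map_sum φ _ _).trans (Finset.sum_congr rfl fun i _ => ?_)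
  rw [basisVec, ← map_smul, ← Pi.single_smul', smul_eq_mul, mul_one]

theorem ContinuousLinearMap.forall_apply_eq_zero_iff (φ : (Fin n → ℝ) →L[ℝ] ℝ) :
    (∀ x, φ x = 0) ↔ ∀ i, φ (basisVec i) = 0 :=
  ⟨fun h i => h _, fun h x => by simp [φ.apply_eq_sum_basisVec x, h]⟩

theorem ContinuousLinearMap.apply_apply_eq_sum_basisVec {M : Type*} [NormedAddCommGroup M]
    [NormedSpace ℝ M] (B : (Fin n → ℝ) →L[ℝ] (Fin n → ℝ) →L[ℝ] M) (u w : Fin n → ℝ) :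
    B u w = ∑ i, ∑ j, (u i * w j) • B (basisVec i) (basisVec j) := by
  simp [B.apply_eq_sum_basisVec u, (B _).apply_eq_sum_basisVec w, Finset.smul_sum, mul_smul]

variable {g : (Fin n → ℝ) → ((Fin n → ℝ) →L[ℝ] (Fin n → ℝ) →L[ℝ] ℝ)} {q : Fin n → ℝ}

theorem fderiv_liouville_apply (hg : DifferentiableAt ℝ g q) (v : Fin n → ℝ)
    (X Y : (Fin n → ℝ) × (Fin n → ℝ)) :
    fderiv ℝ (liouville g) (q, v) X Y = fderiv ℝ g q X.1 v Y.1 + g q X.2 Y.1 := by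
  have h := (hg.hasFDerivAt.clm_apply_prod v).clm_comp
    (hasFDerivAt_const (ContinuousLinearMap.fst ℝ (Fin n → ℝ) (Fin n → ℝ)) (q, v))
  unfold liouville
  rw [h.fderiv]
  simp only [ContinuousLinearMap.comp_zero, zero_add, ContinuousLinearMap.comp_apply,
    add_apply, ContinuousLinearMap.compL_apply, ContinuousLinearMap.coe_fst',
    ContinuousLinearMap.coe_snd', ContinuousLinearMap.flip_apply, add_comm]

theorem fderiv_kineticEnergy_apply (hg : DifferentiableAt ℝ g q) (v : Fin n → ℝ)
    (X : (Fin n → ℝ) × (Fin n → ℝ)) :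
    fderiv ℝ (kineticEnergy g) (q, v) X
      = (1/2) * (fderiv ℝ g q X.1 v v + g q X.2 v + g q v X.2) := by
  have h := ((hg.hasFDerivAt.clm_apply_prod v).clm_apply hasFDerivAt_snd).const_mul (1/2 : ℝ)
  unfold kineticEnergy
  rw [h.fderiv]
  simp only [smul_apply, add_apply, ContinuousLinearMap.flip_apply, ContinuousLinearMap.comp_apply,
    ContinuousLinearMap.coe_fst', ContinuousLinearMap.coe_snd', smul_eq_mul]
  ring

theorem omega2_add_fderiv_kineticEnergy (hg : DifferentiableAt ℝ g q)
    (hsymm : ∀ u w, g q u w = g q w u) (v F : Fin n → ℝ) (X : (Fin n → ℝ) × (Fin n → ℝ)) :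
    omega2 g (q, v) (v, F) X + fderiv ℝ (kineticEnergy g) (q, v) X
      = fderiv ℝ g q v v X.1 + g q F X.1 - (1/2) * fderiv ℝ g q X.1 v v := by
  rw [omega2, fderiv_liouville_apply hg, fderiv_liouville_apply hg,
    fderiv_kineticEnergy_apply hg, hsymm v X.2]
  ring

noncomputable def christoffelFirstKind
    (g : (Fin n → ℝ) → ((Fin n → ℝ) →L[ℝ] (Fin n → ℝ) →L[ℝ] ℝ))
    (k i j : Fin n) (q : Fin n → ℝ) : ℝ :=
  (1/2) * (fderiv ℝ (fun p => g p (basisVec j) (basisVec k)) q (basisVec i)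
    + fderiv ℝ (fun p => g p (basisVec i) (basisVec k)) q (basisVec j)
    - fderiv ℝ (fun p => g p (basisVec i) (basisVec j)) q (basisVec k))

theorem christoffel_eq_sum_christoffelFirstKind (ginv : (Fin n → ℝ) → Fin n → Fin n → ℝ)
    (l i j : Fin n) (q : Fin n → ℝ) :
    christoffel g ginv l i j q = ∑ k, ginv q l k * christoffelFirstKind g k i j q := by
  rw [christoffel, Finset.mul_sum]
  exact Finset.sum_congr rfl fun k _ => by rw [christoffelFirstKind]; ring

theorem sum_christoffel_mul_mul (ginv : (Fin n → ℝ) → Fin n → Fin n → ℝ) (l : Fin n)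
    (v : Fin n → ℝ) :
    ∑ i, ∑ j, christoffel g ginv l i j q * v i * v j
      = ∑ k, ginv q l k * ∑ i, ∑ j, christoffelFirstKind g k i j q * v i * v j := by
  simp only [christoffel_eq_sum_christoffelFirstKind, Finset.sum_mul, Finset.mul_sum]
  calc ∑ i, ∑ j, ∑ k, ginv q l k * christoffelFirstKind g k i j q * v i * v j
      = ∑ i, ∑ k, ∑ j, ginv q l k * christoffelFirstKind g k i j q * v i * v j :=
        Finset.sum_congr rfl fun i _ => Finset.sum_comm
    _ = _ := by
        rw [Finset.sum_comm]
        exact Finset.sum_congr rfl fun k _ => Finset.sum_congr rfl fun i _ =>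
          Finset.sum_congr rfl fun j _ => by ring

theorem sum_christoffelFirstKind_mul_mul (hg : DifferentiableAt ℝ g q) (k : Fin n) (v : Fin n → ℝ) :
    ∑ i, ∑ j, christoffelFirstKind g k i j q * v i * v j
      = fderiv ℝ g q v v (basisVec k) - (1/2) * fderiv ℝ g q (basisVec k) v v := by
  set D := fderiv ℝ g q
  have hswap : ∑ i, ∑ j, v i * v j * D (basisVec j) (basisVec i) (basisVec k)
      = ∑ i, ∑ j, v i * v j * D (basisVec i) (basisVec j) (basisVec k) := by
    rw [Finset.sum_comm]
    exact Finset.sum_congr rfl fun i _ => Finset.sum_congr rfl fun j _ => by ring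
  calc ∑ i, ∑ j, christoffelFirstKind g k i j q * v i * v j
      = (1/2) * ∑ i, ∑ j, v i * v j * D (basisVec i) (basisVec j) (basisVec k)
        + (1/2) * ∑ i, ∑ j, v i * v j * D (basisVec j) (basisVec i) (basisVec k)
        - (1/2) * ∑ i, ∑ j, v i * v j * D (basisVec k) (basisVec i) (basisVec j) := by
        simp only [christoffelFirstKind, fderiv_clm_apply_apply_const hg, Finset.mul_sum,
          ← Finset.sum_add_distrib, ← Finset.sum_sub_distrib]
        exact Finset.sum_congr rfl fun i _ => Finset.sum_congr rfl fun j _ => by ring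
    _ = D v v (basisVec k) - (1/2) * D (basisVec k) v v := by
        rw [hswap, D.apply_apply_eq_sum_basisVec v v, (D _).apply_apply_eq_sum_basisVec v v]
        simp only [sum_apply, smul_apply, smul_eq_mul]
        ring

theorem newtonLagrange_iff (hg : DifferentiableAt ℝ g q) (hsymm : ∀ u w, g q u w = g q w u)
    {ginv : (Fin n → ℝ) → Fin n → Fin n → ℝ}
    (hginv : ∀ i j : Fin n,
      (∑ k, g q (basisVec i) (basisVec k) * ginv q k j) = if i = j then 1 else 0)
    (v F : Fin n → ℝ) (a : (Fin n → ℝ) →L[ℝ] ℝ) :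
    (∀ X : (Fin n → ℝ) × (Fin n → ℝ),
        omega2 g (q, v) (v, F) X + fderiv ℝ (kineticEnergy g) (q, v) X + a X.1 = 0)
    ↔ ∀ l, F l = -((∑ k, ginv q l k * a (basisVec k))
        + ∑ i, ∑ j, christoffel g ginv l i j q * v i * v j) := by
  set G : Matrix (Fin n) (Fin n) ℝ := Matrix.of fun i j => g q (basisVec i) (basisVec j)
  have hG : G * Matrix.of (ginv q) = 1 := by
    ext i j
    simpa [G, Matrix.mul_apply, Matrix.one_apply] using hginv i j
  set c : Fin n → ℝ := fun k => a (basisVec k) + ∑ i, ∑ j, christoffelFirstKind g k i j q * v i * v j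
  set ψ : (Fin n → ℝ) →L[ℝ] ℝ := fderiv ℝ g q v v + g q F + a
    - (1/2 : ℝ) • ((ContinuousLinearMap.apply ℝ ℝ v).comp
      ((ContinuousLinearMap.apply ℝ _ v).comp (fderiv ℝ g q)))
  have hψ : ∀ X : (Fin n → ℝ) × (Fin n → ℝ),
      omega2 g (q, v) (v, F) X + fderiv ℝ (kineticEnergy g) (q, v) X + a X.1 = ψ X.1 := by
    intro X
    rw [omega2_add_fderiv_kineticEnergy hg hsymm]
    simp only [ψ, sub_apply, add_apply, smul_apply, ContinuousLinearMap.comp_apply,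
      ContinuousLinearMap.apply_apply, smul_eq_mul]
    ring
  have hψ_basisVec : ∀ k, ψ (basisVec k) = (G *ᵥ F + c) k := by
    intro k
    simp only [ψ, c, G, sub_apply, add_apply, smul_apply, ContinuousLinearMap.comp_apply,
      ContinuousLinearMap.apply_apply, smul_eq_mul, hsymm _ (basisVec k),
      (g q (basisVec k)).apply_eq_sum_basisVec F, mul_comm (F _),
      sum_christoffelFirstKind_mul_mul hg, Pi.add_apply, Matrix.mulVec, dotProduct, Matrix.of_apply]
    ring
  calc (∀ X : (Fin n → ℝ) × (Fin n → ℝ),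
          omega2 g (q, v) (v, F) X + fderiv ℝ (kineticEnergy g) (q, v) X + a X.1 = 0)
      ↔ ∀ x, ψ x = 0 :=
        ⟨fun h x => by simpa [hψ] using h (x, 0), fun h X => by rw [hψ]; exact h X.1⟩
    _ ↔ G *ᵥ F + c = 0 := by
        rw [ψ.forall_apply_eq_zero_iff, funext_iff]
        simp only [hψ_basisVec, Pi.zero_apply]
    _ ↔ F = -(Matrix.of (ginv q) *ᵥ c) := Matrix.mulVec_add_eq_zero_iff hG F c
    _ ↔ _ := by
        simp only [funext_iff, c, sum_christoffel_mul_mul, Pi.neg_apply, Matrix.mulVec, dotProduct,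
          Matrix.of_apply, mul_add, Finset.sum_add_distrib]

end

theorem newton_lagrange_coordinates_general {n : ℕ} (U : Set (Fin n → ℝ)) (hU : IsOpen U)
    (g : (Fin n → ℝ) → ((Fin n → ℝ) →L[ℝ] (Fin n → ℝ) →L[ℝ] ℝ))
    (hg : ContDiffOn ℝ (⊤ : ℕ∞) g U)
    (hsymm : ∀ q ∈ U, ∀ u w : Fin n → ℝ, g q u w = g q w u)
    (ginv : (Fin n → ℝ) → Fin n → Fin n → ℝ)
    (hginv : ∀ q ∈ U, ∀ i j : Fin n,
      (∑ k, g q (basisVec i) (basisVec k) * ginv q k j) = if i = j then 1 else 0)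
    (f : (Fin n → ℝ) × (Fin n → ℝ) → (Fin n → ℝ))
    (α : (Fin n → ℝ) × (Fin n → ℝ) → ((Fin n → ℝ) →L[ℝ] ℝ)) :
    (∀ p : (Fin n → ℝ) × (Fin n → ℝ), p.1 ∈ U →
      ∀ X : (Fin n → ℝ) × (Fin n → ℝ),
        omega2 g p (p.2, f p) X + fderiv ℝ (kineticEnergy g) p X + α p X.1 = 0)
    ↔ (∀ q ∈ U, ∀ (v : Fin n → ℝ) (l : Fin n),
        f (q, v) l = -((∑ k, ginv q l k * α (q, v) (basisVec k))
          + ∑ i, ∑ j, christoffel g ginv l i j q * v i * v j)) := by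
  have pointwise : ∀ q ∈ U, ∀ v, _ := fun q hq v =>
    newtonLagrange_iff ((hg.contDiffAt (hU.mem_nhds hq)).differentiableAt (by simp))
      (hsymm q hq) (hginv q hq) v (f (q, v)) (α (q, v))
  constructor
  · intro H q hq v
    exact (pointwise q hq v).1 (H (q, v) hq)
  · rintro H ⟨q, v⟩ hq
    exact (pointwise q hq v).2 (H q hq v)

/-- For a smooth pseudo-Riemannian metric `g` on an open set `U ⊆ ℝⁿ`,
the Newton–Lagrange equation `i_D ω₂ + dT + α̂ = 0` for the second order differential
equation `D(q,v) = (v, f(q,v))` holds at every point of `U × ℝⁿ` if and only if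
`fˡ = −(Σ_k g^{lk} α_k + Σ_{ij} Γˡ_{ij} vⁱ vʲ)` in coordinates. -/
theorem newton_lagrange_coordinates {n : ℕ} (U : Set (Fin n → ℝ)) (hU : IsOpen U)
    (g : (Fin n → ℝ) → ((Fin n → ℝ) →L[ℝ] (Fin n → ℝ) →L[ℝ] ℝ))
    (hg : ContDiffOn ℝ (⊤ : ℕ∞) g U)
    (hsymm : ∀ q ∈ U, ∀ u w : Fin n → ℝ, g q u w = g q w u)
    (hnondeg : ∀ q ∈ U, ∀ u : Fin n → ℝ, (∀ w, g q u w = 0) → u = 0)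
    (ginv : (Fin n → ℝ) → Fin n → Fin n → ℝ)
    (hginv : ∀ q ∈ U, ∀ i j : Fin n,
      (∑ k, g q (basisVec i) (basisVec k) * ginv q k j) = if i = j then 1 else 0)
    (f : (Fin n → ℝ) × (Fin n → ℝ) → (Fin n → ℝ))
    (hf : ContDiffOn ℝ (⊤ : ℕ∞) f (U ×ˢ (Set.univ : Set (Fin n → ℝ))))
    (α : (Fin n → ℝ) × (Fin n → ℝ) → ((Fin n → ℝ) →L[ℝ] ℝ)) :
    (∀ p : (Fin n → ℝ) × (Fin n → ℝ), p.1 ∈ U →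
      ∀ X : (Fin n → ℝ) × (Fin n → ℝ),
        omega2 g p (p.2, f p) X + fderiv ℝ (kineticEnergy g) p X + α p X.1 = 0)
    ↔ (∀ q ∈ U, ∀ (v : Fin n → ℝ) (l : Fin n),
        f (q, v) l = -((∑ k, ginv q l k * α (q, v) (basisVec k))
          + ∑ i, ∑ j, christoffel g ginv l i j q * v i * v j)) :=
  newton_lagrange_coordinates_general U hU g hg hsymm ginv hginv f α
end

section
/- Let U ⊆ ℝⁿ be open, g : U → (ℝⁿ →ₗ ℝⁿ →ₗ ℝ) a smooth map with each g(q) a symmetric nondegenerate bilinear form, with Christoffel symbols Γˡ_{ij}, and let α : U × ℝⁿ → (ℝⁿ)* be a horizontal 1-form. Let I ⊆ ℝ be an open interval and x : I → U a twice-differentiable curve satisfying the Newton equation (x'')ˡ(t) = −( Σ_k g^{lk}(x(t)) α_k(x(t), x'(t)) + Σ_{i,j} Γˡ_{ij}(x(t)) (x')ⁱ(t) (x')ʲ(t) ) for all t ∈ I. Then for all t ∈ I, the derivative of the energy along the curve satisfies d/dt [ (1/2) g(x(t))(x'(t), x'(t)) ] = −α(x(t), x'(t))(x'(t)). -/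
/-!
Differentiating, the energy changes at the rate `½ ∂g(x')(x', x') + g(x'', x')`, using the symmetry
of `g`. In the Newton equation the inverse metric cancels against `g`, so `g(x'', x')` is
`-α(x') - Γ♭(x', x', x')`, where `Γ♭` is the Christoffel symbol of the first kind. Contracted with
`x'` three times, its two `∂_i g_{jk}` terms and its `-∂_k g_{ij}` term leave `½ ∂g(x')(x', x')`,
which cancels the first term.
-/

lemma hasDerivAt_half_apply_apply {E : Type*} [NormedAddCommGroup E] [NormedSpace ℝ E]
    {g : E → E →L[ℝ] E →L[ℝ] ℝ} {Dg : E →L[ℝ] E →L[ℝ] E →L[ℝ] ℝ} {x v : ℝ → E} {b : E} {t : ℝ}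
    (hg : HasFDerivAt g Dg (x t)) (hx : HasDerivAt x (v t) t) (hv : HasDerivAt v b t) :
    HasDerivAt (fun s => (1/2 : ℝ) * g (x s) (v s) (v s))
      ((1/2) * (Dg (v t) (v t) (v t) + g (x t) b (v t) + g (x t) (v t) b)) t := by
  have hgx : HasDerivAt (fun s => g (x s)) (Dg (v t)) t :=
    hg.comp_hasDerivAt (E := E →L[ℝ] E →L[ℝ] ℝ) t hx
  refine (((hgx.clm_apply hv).clm_apply hv).const_mul (1/2 : ℝ)).congr_deriv ?_
  rw [add_apply, add_assoc]

open Matrix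

section Coordinates

variable {n : ℕ} {F : Type*} [NormedAddCommGroup F] [NormedSpace ℝ F]

lemma sum_smul_basisVec (u : Fin n → ℝ) : ∑ i, u i • basisVec i = u := by
  simpa [basisVec] using (Pi.basisFun ℝ (Fin n)).sum_repr u

lemma sum_smul_apply_basisVec (T : (Fin n → ℝ) →L[ℝ] F) (u : Fin n → ℝ) :
    ∑ i, u i • T (basisVec i) = T u := by
  simp_rw [← map_smul, ← map_sum, sum_smul_basisVec]

lemma sum_sum_smul_apply_basisVec (B : (Fin n → ℝ) →L[ℝ] (Fin n → ℝ) →L[ℝ] F)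
    (u v : Fin n → ℝ) : ∑ i, ∑ j, (u i * v j) • B (basisVec i) (basisVec j) = B u v := by
  conv_rhs => rw [← sum_smul_apply_basisVec B u]
  simp only [FunLike.coe_sum, Finset.sum_apply, FunLike.coe_smul,
    Pi.smul_apply, ← sum_smul_apply_basisVec (B _) v, Finset.smul_sum, mul_smul]

lemma apply_eq_dotProduct_mulVec (B : (Fin n → ℝ) →L[ℝ] (Fin n → ℝ) →L[ℝ] ℝ) (u v : Fin n → ℝ) :
    B u v = u ⬝ᵥ (Matrix.of (fun i j => B (basisVec i) (basisVec j)) *ᵥ v) := by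
  simp only [dotProduct, mulVec, Matrix.of_apply, Finset.mul_sum]
  rw [← sum_sum_smul_apply_basisVec B u v]
  simp only [smul_eq_mul]
  exact Finset.sum_congr rfl fun i _ => Finset.sum_congr rfl fun j _ => by ring

lemma apply_mulVec_eq_dotProduct (B : (Fin n → ℝ) →L[ℝ] (Fin n → ℝ) →L[ℝ] ℝ)
    (hB : ∀ u w, B u w = B w u) {H : Matrix (Fin n) (Fin n) ℝ}
    (hBH : Matrix.of (fun i j => B (basisVec i) (basisVec j)) * H = 1) (c u : Fin n → ℝ) :
    B (H *ᵥ c) u = c ⬝ᵥ u := by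
  rw [hB, apply_eq_dotProduct_mulVec, dotProduct_comm, mulVec_mulVec, hBH, one_mulVec]

lemma dotProduct_apply_basisVec (T : (Fin n → ℝ) →L[ℝ] ℝ) (u : Fin n → ℝ) :
    (fun i => T (basisVec i)) ⬝ᵥ u = T u := by
  simp only [dotProduct, ← sum_smul_apply_basisVec T u, smul_eq_mul, mul_comm]

end Coordinates

section Metric

variable {n : ℕ} {g : (Fin n → ℝ) → ((Fin n → ℝ) →L[ℝ] (Fin n → ℝ) →L[ℝ] ℝ)} {q : Fin n → ℝ}
  {Dg : (Fin n → ℝ) →L[ℝ] ((Fin n → ℝ) →L[ℝ] (Fin n → ℝ) →L[ℝ] ℝ)}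

lemma fderiv_apply_apply_of_hasFDerivAt (hg : HasFDerivAt g Dg q) (u v w : Fin n → ℝ) :
    fderiv ℝ (fun p => g p v w) q u = Dg u v w := by
  rw [((hg.clm_apply (hasFDerivAt_const v q)).clm_apply (hasFDerivAt_const w q)).fderiv]
  simp

lemma christoffel_eq_of_hasFDerivAt (hg : HasFDerivAt g Dg q)
    (ginv : (Fin n → ℝ) → Fin n → Fin n → ℝ) (l i j : Fin n) :
    christoffel g ginv l i j q = (1/2) * ∑ k, ginv q l k *
      (Dg (basisVec i) (basisVec j) (basisVec k) + Dg (basisVec j) (basisVec i) (basisVec k)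
        - Dg (basisVec k) (basisVec i) (basisVec j)) := by
  simp only [christoffel, fderiv_apply_apply_of_hasFDerivAt hg]

lemma sum_sum_christoffel_mul_mul (hg : HasFDerivAt g Dg q)
    (ginv : (Fin n → ℝ) → Fin n → Fin n → ℝ) (a : Fin n → ℝ) (l : Fin n) :
    ∑ i, ∑ j, christoffel g ginv l i j q * a i * a j
      = ∑ k, ginv q l k * (Dg a a (basisVec k) - (1/2) * Dg (basisVec k) a a) := by
  have h₁ (k) : ∑ i, ∑ j, a i * a j * Dg (basisVec i) (basisVec j) (basisVec k)
      = Dg a a (basisVec k) := by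
    simpa using congrArg (· (basisVec k)) (sum_sum_smul_apply_basisVec Dg a a)
  have h₂ (k) : ∑ i, ∑ j, a i * a j * Dg (basisVec j) (basisVec i) (basisVec k)
      = Dg a a (basisVec k) := by
    rw [Finset.sum_comm, ← h₁]
    exact Finset.sum_congr rfl fun j _ => Finset.sum_congr rfl fun i _ => by ring
  have h₃ (k) : ∑ i, ∑ j, a i * a j * Dg (basisVec k) (basisVec i) (basisVec j)
      = Dg (basisVec k) a a := by
    simpa using sum_sum_smul_apply_basisVec (Dg (basisVec k)) a a
  calc ∑ i, ∑ j, christoffel g ginv l i j q * a i * a j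
      = ∑ k, ginv q l k * ((1/2) *
          (∑ i, ∑ j, a i * a j * Dg (basisVec i) (basisVec j) (basisVec k)
            + ∑ i, ∑ j, a i * a j * Dg (basisVec j) (basisVec i) (basisVec k)
            - ∑ i, ∑ j, a i * a j * Dg (basisVec k) (basisVec i) (basisVec j))) := by
        simp only [christoffel_eq_of_hasFDerivAt hg, ← Finset.sum_sub_distrib,
          ← Finset.sum_add_distrib, Finset.mul_sum, Finset.sum_mul]
        conv_rhs => rw [Finset.sum_comm]
        refine Finset.sum_congr rfl fun i _ => ?_
        conv_rhs => rw [Finset.sum_comm]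
        refine Finset.sum_congr rfl fun j _ => Finset.sum_congr rfl fun k _ => by ring
    _ = _ := Finset.sum_congr rfl fun k _ => by rw [h₁, h₂, h₃]; ring

end Metric

theorem energy_derivative_along_trajectory_general {n : ℕ} (U : Set (Fin n → ℝ)) (hU : IsOpen U)
    (g : (Fin n → ℝ) → ((Fin n → ℝ) →L[ℝ] (Fin n → ℝ) →L[ℝ] ℝ))
    (hg : ContDiffOn ℝ (⊤ : ℕ∞) g U)
    (hsymm : ∀ q ∈ U, ∀ u w : Fin n → ℝ, g q u w = g q w u)
    (ginv : (Fin n → ℝ) → Fin n → Fin n → ℝ)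
    (hginv : ∀ q ∈ U, ∀ i j : Fin n,
      (∑ k, g q (basisVec i) (basisVec k) * ginv q k j) = if i = j then 1 else 0)
    (α : (Fin n → ℝ) × (Fin n → ℝ) → ((Fin n → ℝ) →L[ℝ] ℝ))
    (I : Set ℝ)
    (x x' x'' : ℝ → (Fin n → ℝ))
    (hxU : ∀ t ∈ I, x t ∈ U)
    (hx' : ∀ t ∈ I, HasDerivAt x (x' t) t)
    (hx'' : ∀ t ∈ I, HasDerivAt x' (x'' t) t)
    (hNewton : ∀ t ∈ I, ∀ l : Fin n,
      x'' t l = -((∑ k, ginv (x t) l k * α (x t, x' t) (basisVec k))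
        + ∑ i, ∑ j, christoffel g ginv l i j (x t) * x' t i * x' t j)) :
    ∀ t ∈ I,
      HasDerivAt (fun s => (1/2 : ℝ) * g (x s) (x' s) (x' s))
        (-(α (x t, x' t) (x' t))) t := by
  intro t ht
  have hq := hxU t ht
  set Dg := fderiv ℝ g (x t)
  have hDg : HasFDerivAt g Dg (x t) :=
    ((hg.contDiffAt (hU.mem_nhds hq)).differentiableAt (by simp)).hasFDerivAt
  have hG :
      Matrix.of (fun i j => g (x t) (basisVec i) (basisVec j)) * Matrix.of (ginv (x t)) = 1 := by
    ext i j
    simpa [Matrix.mul_apply, Matrix.one_apply] using hginv _ hq i j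
  -- `α` plus the Christoffel term with its index lowered: Newton's equation says `g(x'', ·) = -T`.
  set T : (Fin n → ℝ) →L[ℝ] ℝ :=
    α (x t, x' t) + Dg (x' t) (x' t) - (1/2 : ℝ) • (Dg.flip (x' t)).flip (x' t)
  have hx''_eq : x'' t = -(Matrix.of (ginv (x t)) *ᵥ fun k => T (basisVec k)) := by
    ext l
    simp only [hNewton t ht l, sum_sum_christoffel_mul_mul hDg, T, mulVec, dotProduct, of_apply,
      _root_.sub_apply, _root_.add_apply, _root_.smul_apply, ContinuousLinearMap.flip_apply,
      smul_eq_mul, Pi.neg_apply, mul_add, mul_sub, Finset.sum_add_distrib, Finset.sum_sub_distrib]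
    ring
  refine (hasDerivAt_half_apply_apply hDg (hx' t ht) (hx'' t ht)).congr_deriv ?_
  rw [hsymm _ hq (x' t), hx''_eq, map_neg, _root_.neg_apply,
    apply_mulVec_eq_dotProduct _ (hsymm _ hq) hG, dotProduct_apply_basisVec]
  simp only [T, _root_.sub_apply, _root_.add_apply, _root_.smul_apply,
    ContinuousLinearMap.flip_apply, smul_eq_mul]
  ring

/-- Along every twice-differentiable curve solving the Newton equation
of the mechanical system `(U, g, α)`, the derivative of the energy
`t ↦ (1/2) g(x(t))(x'(t), x'(t))` equals `−α(x(t), x'(t))(x'(t))`. -/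
theorem energy_derivative_along_trajectory {n : ℕ} (U : Set (Fin n → ℝ)) (hU : IsOpen U)
    (g : (Fin n → ℝ) → ((Fin n → ℝ) →L[ℝ] (Fin n → ℝ) →L[ℝ] ℝ))
    (hg : ContDiffOn ℝ (⊤ : ℕ∞) g U)
    (hsymm : ∀ q ∈ U, ∀ u w : Fin n → ℝ, g q u w = g q w u)
    (hnondeg : ∀ q ∈ U, ∀ u : Fin n → ℝ, (∀ w, g q u w = 0) → u = 0)
    (ginv : (Fin n → ℝ) → Fin n → Fin n → ℝ)
    (hginv : ∀ q ∈ U, ∀ i j : Fin n,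
      (∑ k, g q (basisVec i) (basisVec k) * ginv q k j) = if i = j then 1 else 0)
    (α : (Fin n → ℝ) × (Fin n → ℝ) → ((Fin n → ℝ) →L[ℝ] ℝ))
    (I : Set ℝ) (hI : IsOpen I) (hI' : I.OrdConnected)
    (x x' x'' : ℝ → (Fin n → ℝ))
    (hxU : ∀ t ∈ I, x t ∈ U)
    (hx' : ∀ t ∈ I, HasDerivAt x (x' t) t)
    (hx'' : ∀ t ∈ I, HasDerivAt x' (x'' t) t)
    (hNewton : ∀ t ∈ I, ∀ l : Fin n,
      x'' t l = -((∑ k, ginv (x t) l k * α (x t, x' t) (basisVec k))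
        + ∑ i, ∑ j, christoffel g ginv l i j (x t) * x' t i * x' t j)) :
    ∀ t ∈ I,
      HasDerivAt (fun s => (1/2 : ℝ) * g (x s) (x' s) (x' s))
        (-(α (x t, x' t) (x' t))) t :=
  energy_derivative_along_trajectory_general U hU g hg hsymm ginv hginv α I x x' x'' hxU hx' hx''
    hNewton
end

section
/- Let U ⊆ ℝⁿ be open, g : U → (ℝⁿ →ₗ ℝⁿ →ₗ ℝ) a smooth map with each g(q) a symmetric nondegenerate bilinear form, with Christoffel symbols Γˡ_{ij}, and let α : U × ℝⁿ → (ℝⁿ)* be a smooth horizontal 1-form. Then α is a contact form (α(q,v)(v) = 0 for all (q,v) ∈ U × ℝⁿ) if and only if for every twice-differentiable curve x : I → U (I ⊆ ℝ an open interval) satisfying the Newton equation (x'')ˡ(t) = −( Σ_k g^{lk}(x(t)) α_k(x(t), x'(t)) + Σ_{i,j} Γˡ_{ij}(x(t)) (x')ⁱ(t) (x')ʲ(t) ), the function t ↦ g(x(t))(x'(t), x'(t)) is constant on I. (The converse direction uses that through each initial condition (q₀, v₀) ∈ U × ℝⁿ there passes a local solution of the Newton equation, which holds by Picard–Lindelöf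 since g and α are smooth.) -/
/-! Along a solution of the Newton equation, the derivative of the energy `g(x)(x', x')` is
`Dg(x)(x')(x', x') + 2 g(x)(x', x'')`. Lowering the index of `x''` with `g` turns the Christoffel
term into `-½ Dg(x)(x')(x', x')` and the force term into `-α(x, x')(x')`, so the energy has
derivative `-2 α(x, x')(x')`. Hence it is constant along every solution when `α` is a contact
form; conversely, the solution through an arbitrary initial condition `(q, v)`, which exists by
Picard–Lindelöf, has constant energy, which forces `α(q, v)(v) = 0`. -/

open Finset Matrix
open scoped ContDiff Topology

variable {n : ℕ}

lemma map_eq_sum_smul_basisVec {M : Type*} [AddCommMonoid M] [Module ℝ M] [TopologicalSpace M]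
    (T : (Fin n → ℝ) →L[ℝ] M) (v : Fin n → ℝ) : T v = ∑ i, v i • T (basisVec i) := by
  conv_lhs => rw [pi_eq_sum_univ' v]
  simp only [map_sum, map_smul, basisVec]

lemma toMatrix₂'_toLinearMap₁₂_apply (B : (Fin n → ℝ) →L[ℝ] (Fin n → ℝ) →L[ℝ] ℝ) (i j : Fin n) :
    LinearMap.toMatrix₂' ℝ B.toLinearMap₁₂ i j = B (basisVec i) (basisVec j) :=
  LinearMap.toMatrix₂'_apply _ i j

lemma apply_eq_dotProduct_toMatrix₂'_mulVec (B : (Fin n → ℝ) →L[ℝ] (Fin n → ℝ) →L[ℝ] ℝ)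
    (u w : Fin n → ℝ) : B u w = u ⬝ᵥ (LinearMap.toMatrix₂' ℝ B.toLinearMap₁₂ *ᵥ w) := by
  rw [← Matrix.toLinearMap₂'_apply', Matrix.toLinearMap₂'_toMatrix']
  rfl

lemma sum_mul_mul_mul_apply_basisVec
    (T : (Fin n → ℝ) →L[ℝ] (Fin n → ℝ) →L[ℝ] (Fin n → ℝ) →L[ℝ] ℝ) (v : Fin n → ℝ) :
    ∑ i, ∑ j, ∑ k, v i * v j * v k * T (basisVec i) (basisVec j) (basisVec k) = T v v v := by
  conv_rhs => rw [map_eq_sum_smul_basisVec T v]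
  simp only [_root_.sum_apply, _root_.smul_apply, smul_eq_mul]
  refine sum_congr rfl fun i _ => ?_
  rw [map_eq_sum_smul_basisVec (T (basisVec i)) v]
  simp only [_root_.sum_apply, _root_.smul_apply, smul_eq_mul, mul_sum]
  refine sum_congr rfl fun j _ => ?_
  rw [map_eq_sum_smul_basisVec (T (basisVec i) (basisVec j)) v]
  simp only [smul_eq_mul, mul_sum]
  exact sum_congr rfl fun k _ => by ring

-- The Christoffel symbol of the first kind `Γ_{kij}` when `T = Dg(q)`, so that
-- `T (basisVec a) (basisVec b) (basisVec c) = ∂_a g_{bc}(q)`.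
noncomputable def christoffelFirst
    (T : (Fin n → ℝ) →L[ℝ] (Fin n → ℝ) →L[ℝ] (Fin n → ℝ) →L[ℝ] ℝ) (i j k : Fin n) : ℝ :=
  (1/2) * (T (basisVec i) (basisVec j) (basisVec k) + T (basisVec j) (basisVec i) (basisVec k)
    - T (basisVec k) (basisVec i) (basisVec j))

lemma dotProduct_christoffelFirst
    (T : (Fin n → ℝ) →L[ℝ] (Fin n → ℝ) →L[ℝ] (Fin n → ℝ) →L[ℝ] ℝ) (v : Fin n → ℝ) :
    (v ⬝ᵥ fun k => ∑ i, ∑ j, christoffelFirst T i j k * v i * v j) = (1/2) * T v v v := by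
  set f : Fin n → Fin n → Fin n → ℝ := fun i j k =>
    v i * v j * v k * T (basisVec i) (basisVec j) (basisVec k)
  have hcycle (F : Fin n → Fin n → Fin n → ℝ) :
      ∑ a, ∑ b, ∑ c, F a b c = ∑ b, ∑ c, ∑ a, F a b c := by
    rw [sum_comm]
    exact sum_congr rfl fun _ _ => sum_comm
  calc (v ⬝ᵥ fun k => ∑ i, ∑ j, christoffelFirst T i j k * v i * v j)
      = (1/2) * (∑ k, ∑ i, ∑ j, f i j k + ∑ k, ∑ i, ∑ j, f j i k - ∑ k, ∑ i, ∑ j, f k i j) := by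
        simp only [dotProduct, mul_sum, ← sum_add_distrib, ← sum_sub_distrib, christoffelFirst, f]
        refine sum_congr rfl fun k _ => sum_congr rfl fun i _ => sum_congr rfl fun j _ => ?_
        ring
    _ = (1/2) * T v v v := by
        rw [hcycle (fun k i j => f i j k), hcycle (fun k i j => f j i k),
          sum_comm (f := fun i j => ∑ k, f j i k), sum_mul_mul_mul_apply_basisVec]
        ring

section Calculus

variable {E F : Type*} [NormedAddCommGroup E] [NormedSpace ℝ E] [NormedAddCommGroup F]
  [NormedSpace ℝ F]

lemma fderiv_apply_apply {g : E → F →L[ℝ] F →L[ℝ] ℝ} {q : E} (hg : DifferentiableAt ℝ g q)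
    (u w : F) (h : E) : fderiv ℝ (fun p => g p u w) q h = fderiv ℝ g q h u w := by
  rw [((hg.hasFDerivAt.clm_apply (hasFDerivAt_const u q)).clm_apply
    (hasFDerivAt_const w q)).fderiv]
  simp

lemma HasFDerivAt.comp_hasDerivAt_apply_apply {g : E → F →L[ℝ] F →L[ℝ] ℝ}
    {g' : E →L[ℝ] F →L[ℝ] F →L[ℝ] ℝ} {x : ℝ → E} {y : ℝ → F} {x₁ : E} {y₁ : F} {t : ℝ}
    (hg : HasFDerivAt g g' (x t)) (hx : HasDerivAt x x₁ t) (hy : HasDerivAt y y₁ t) :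
    HasDerivAt (fun s => g (x s) (y s) (y s))
      (g' x₁ (y t) (y t) + g (x t) y₁ (y t) + g (x t) (y t) y₁) t := by
  have hgx : HasDerivAt (fun s => g (x s)) (g' x₁) t :=
    hg.comp_hasDerivAt (E := F →L[ℝ] F →L[ℝ] ℝ) t hx
  refine ((hgx.clm_apply hy).clm_apply hy).congr_deriv ?_
  rw [_root_.add_apply]

lemma contDiffAt_det {m : WithTop ℕ∞} {M : E → Matrix (Fin n) (Fin n) ℝ} {q : E}
    (hM : ∀ i j, ContDiffAt ℝ m (fun p => M p i j) q) :
    ContDiffAt ℝ m (fun p => (M p).det) q := by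
  simp only [det_apply']
  exact ContDiffAt.sum fun σ _ => contDiffAt_const.mul
    (contDiffAt_prod (t := univ) (f := fun i p => M p (σ i) i) fun i _ => hM (σ i) i)

lemma contDiffAt_inv_apply {m : WithTop ℕ∞} {M : E → Matrix (Fin n) (Fin n) ℝ} {q : E}
    (hM : ∀ i j, ContDiffAt ℝ m (fun p => M p i j) q) (hdet : (M q).det ≠ 0) (i j : Fin n) :
    ContDiffAt ℝ m (fun p => (M p)⁻¹ i j) q := by
  have hinv : (fun p => (M p)⁻¹ i j) = fun p => ((M p).det)⁻¹ * (M p).adjugate i j := by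
    funext p
    rw [Matrix.inv_def, Matrix.smul_apply, Ring.inverse_eq_inv', smul_eq_mul]
  rw [hinv]
  refine ((contDiffAt_det hM).inv hdet).mul ?_
  simp only [adjugate_apply]
  refine contDiffAt_det fun a b => ?_
  by_cases hab : a = j
  · subst hab
    simpa only [updateRow_self] using contDiffAt_const
  · simpa only [updateRow_ne hab] using hM a b

lemma exists_second_order_solution [CompleteSpace E] {f : E × E → E} {q₀ v₀ : E}
    (hf : ContDiffAt ℝ 1 f (q₀, v₀)) {U : Set E} (hU : U ∈ 𝓝 q₀) :
    ∃ ε > 0, ∃ x x' : ℝ → E, x 0 = q₀ ∧ x' 0 = v₀ ∧ ∀ t ∈ Set.Ioo (-ε) ε,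
      x t ∈ U ∧ HasDerivAt x (x' t) t ∧ HasDerivAt x' (f (x t, x' t)) t := by
  obtain ⟨p, hp0, ε, hε, hp⟩ :=
    (contDiffAt_snd.prodMk hf).exists_forall_mem_closedBall_exists_eq_forall_mem_Ioo_hasDerivAt₀ 0
  have hderiv : ∀ᶠ t in 𝓝 0, HasDerivAt p ((p t).2, f (p t)) t :=
    Filter.eventually_of_mem (Ioo_mem_nhds (by linarith) (by linarith)) hp
  have hmem : ∀ᶠ t in 𝓝 0, (p t).1 ∈ U := by
    have hp0' : ContinuousAt p 0 := (hp 0 ⟨by linarith, by linarith⟩).continuousAt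
    exact (continuousAt_fst.comp hp0').preimage_mem_nhds (by simpa [hp0] using hU)
  obtain ⟨δ, hδ, hball⟩ := Metric.eventually_nhds_iff_ball.1 (hmem.and hderiv)
  refine ⟨δ, hδ, fun t => (p t).1, fun t => (p t).2, by simp [hp0], by simp [hp0], fun t ht => ?_⟩
  obtain ⟨htU, hpt⟩ := hball t (by rwa [Real.ball_eq_Ioo, zero_sub, zero_add])
  exact ⟨htU, hpt.fst, hpt.snd⟩

end Calculus

def IsInvCoeffsAt (g : (Fin n → ℝ) → ((Fin n → ℝ) →L[ℝ] (Fin n → ℝ) →L[ℝ] ℝ))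
    (ginv : (Fin n → ℝ) → Fin n → Fin n → ℝ) (q : Fin n → ℝ) : Prop :=
  ∀ i j : Fin n, ∑ k, g q (basisVec i) (basisVec k) * ginv q k j = if i = j then 1 else 0

noncomputable def newtonAccel (g : (Fin n → ℝ) → ((Fin n → ℝ) →L[ℝ] (Fin n → ℝ) →L[ℝ] ℝ))
    (ginv : (Fin n → ℝ) → Fin n → Fin n → ℝ)
    (α : (Fin n → ℝ) × (Fin n → ℝ) → ((Fin n → ℝ) →L[ℝ] ℝ)) (q v : Fin n → ℝ) : Fin n → ℝ :=
  fun l => -((∑ k, ginv q l k * α (q, v) (basisVec k))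
    + ∑ i, ∑ j, christoffel g ginv l i j q * v i * v j)

section Newton

variable {g : (Fin n → ℝ) → ((Fin n → ℝ) →L[ℝ] (Fin n → ℝ) →L[ℝ] ℝ)}
  {ginv : (Fin n → ℝ) → Fin n → Fin n → ℝ}
  {α : (Fin n → ℝ) × (Fin n → ℝ) → ((Fin n → ℝ) →L[ℝ] ℝ)} {q : Fin n → ℝ}

lemma IsInvCoeffsAt.toMatrix₂'_mul (h : IsInvCoeffsAt g ginv q) :
    LinearMap.toMatrix₂' ℝ (g q).toLinearMap₁₂ * Matrix.of (ginv q) = 1 := by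
  ext i j
  simpa only [mul_apply, toMatrix₂'_toLinearMap₁₂_apply, of_apply, one_apply] using h i j

lemma christoffel_eq_sum_christoffelFirst (hg : DifferentiableAt ℝ g q) (l i j : Fin n) :
    christoffel g ginv l i j q = ∑ k, ginv q l k * christoffelFirst (fderiv ℝ g q) i j k := by
  simp only [christoffel, christoffelFirst, fderiv_apply_apply hg, mul_sum]
  exact sum_congr rfl fun k _ => by ring

lemma newtonAccel_eq_neg_mulVec (hg : DifferentiableAt ℝ g q) (v : Fin n → ℝ) :
    newtonAccel g ginv α q v = -(Matrix.of (ginv q) *ᵥ ((fun k => α (q, v) (basisVec k))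
      + fun k => ∑ i, ∑ j, christoffelFirst (fderiv ℝ g q) i j k * v i * v j)) := by
  ext l
  simp only [newtonAccel, christoffel_eq_sum_christoffelFirst hg, Pi.neg_apply, mulVec,
    dotProduct, of_apply, Pi.add_apply, mul_add, sum_add_distrib, sum_mul, mul_sum]
  congr 2
  conv_rhs => rw [sum_comm]; enter [2, i]; rw [sum_comm]
  exact sum_congr rfl fun i _ => sum_congr rfl fun j _ => sum_congr rfl fun k _ => by ring

lemma apply_newtonAccel (hg : DifferentiableAt ℝ g q) (hginv : IsInvCoeffsAt g ginv q)
    (v : Fin n → ℝ) :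
    g q v (newtonAccel g ginv α q v) = -(α (q, v) v + (1/2) * fderiv ℝ g q v v v) := by
  rw [newtonAccel_eq_neg_mulVec hg, map_neg, apply_eq_dotProduct_toMatrix₂'_mulVec,
    mulVec_mulVec, hginv.toMatrix₂'_mul, one_mulVec, dotProduct_add,
    dotProduct_christoffelFirst]
  congr 2
  simp only [dotProduct, ← smul_eq_mul, ← map_eq_sum_smul_basisVec]

lemma hasDerivAt_energy_of_newton {x x' : ℝ → Fin n → ℝ} {t : ℝ}
    (hg : DifferentiableAt ℝ g (x t)) (hsymm : ∀ u w, g (x t) u w = g (x t) w u)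
    (hginv : IsInvCoeffsAt g ginv (x t)) (hx : HasDerivAt x (x' t) t)
    (hx' : HasDerivAt x' (newtonAccel g ginv α (x t) (x' t)) t) :
    HasDerivAt (fun s => g (x s) (x' s) (x' s)) (-(2 * α (x t, x' t) (x' t))) t := by
  refine (hg.hasFDerivAt.comp_hasDerivAt_apply_apply hx hx').congr_deriv ?_
  rw [hsymm _ (x' t), apply_newtonAccel hg hginv]
  ring

lemma contDiffAt_ginv {m : WithTop ℕ∞} (hg : ContDiffAt ℝ m g q)
    (hginv : ∀ᶠ p in 𝓝 q, IsInvCoeffsAt g ginv p) (i j : Fin n) :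
    ContDiffAt ℝ m (fun p => ginv p i j) q := by
  set G : (Fin n → ℝ) → Matrix (Fin n) (Fin n) ℝ :=
    fun p => LinearMap.toMatrix₂' ℝ (g p).toLinearMap₁₂
  have hG : ∀ a b, ContDiffAt ℝ m (fun p => G p a b) q := fun a b => by
    simpa only [G, toMatrix₂'_toLinearMap₁₂_apply] using
      (hg.clm_apply contDiffAt_const).clm_apply contDiffAt_const
  have hmul : ∀ᶠ p in 𝓝 q, G p * Matrix.of (ginv p) = 1 :=
    hginv.mono fun p hp => hp.toMatrix₂'_mul
  have hdet : (G q).det ≠ 0 := by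
    refine left_ne_zero_of_mul_eq_one (b := (Matrix.of (ginv q)).det) ?_
    rw [← det_mul, hmul.self_of_nhds, det_one]
  refine (contDiffAt_inv_apply hG hdet i j).congr_of_eventuallyEq (hmul.mono fun p hp => ?_)
  simp only [inv_eq_right_inv hp, of_apply]

lemma contDiffAt_christoffel (hg : ContDiffAt ℝ ∞ g q)
    (hginv : ∀ᶠ p in 𝓝 q, IsInvCoeffsAt g ginv p) (l i j : Fin n) :
    ContDiffAt ℝ ∞ (christoffel g ginv l i j) q := by
  have hD (u w h : Fin n → ℝ) : ContDiffAt ℝ ∞ (fun p => fderiv ℝ (fun r => g r u w) p h) q :=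
    (((hg.clm_apply contDiffAt_const).clm_apply contDiffAt_const).fderiv_right le_rfl).clm_apply
      contDiffAt_const
  have hginv' := contDiffAt_ginv hg hginv
  unfold christoffel
  fun_prop

lemma contDiffAt_newtonAccel {v : Fin n → ℝ} (hg : ContDiffAt ℝ ∞ g q)
    (hginv : ∀ᶠ p in 𝓝 q, IsInvCoeffsAt g ginv p) (hα : ContDiffAt ℝ ∞ α (q, v)) :
    ContDiffAt ℝ ∞ (fun p => newtonAccel g ginv α p.1 p.2) (q, v) := by
  have hginv' := contDiffAt_ginv hg hginv
  have hΓ := contDiffAt_christoffel hg hginv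
  refine contDiffAt_pi.2 fun l => ?_
  unfold newtonAccel
  fun_prop

end Newton

theorem contact_iff_constant_speed_general {n : ℕ} (U : Set (Fin n → ℝ)) (hU : IsOpen U)
    (g : (Fin n → ℝ) → ((Fin n → ℝ) →L[ℝ] (Fin n → ℝ) →L[ℝ] ℝ))
    (hg : ContDiffOn ℝ (⊤ : ℕ∞) g U)
    (hsymm : ∀ q ∈ U, ∀ u w : Fin n → ℝ, g q u w = g q w u)
    (ginv : (Fin n → ℝ) → Fin n → Fin n → ℝ)
    (hginv : ∀ q ∈ U, ∀ i j : Fin n,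
      (∑ k, g q (basisVec i) (basisVec k) * ginv q k j) = if i = j then 1 else 0)
    (α : (Fin n → ℝ) × (Fin n → ℝ) → ((Fin n → ℝ) →L[ℝ] ℝ))
    (hα : ContDiffOn ℝ (⊤ : ℕ∞) α (U ×ˢ (Set.univ : Set (Fin n → ℝ)))) :
    (∀ (q : Fin n → ℝ), q ∈ U → ∀ v : Fin n → ℝ, α (q, v) v = 0)
    ↔
    (∀ (I : Set ℝ), IsOpen I → I.OrdConnected →
      ∀ x x' x'' : ℝ → (Fin n → ℝ),
        (∀ t ∈ I, x t ∈ U) →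
        (∀ t ∈ I, HasDerivAt x (x' t) t) →
        (∀ t ∈ I, HasDerivAt x' (x'' t) t) →
        (∀ t ∈ I, ∀ l : Fin n,
          x'' t l = -((∑ k, ginv (x t) l k * α (x t, x' t) (basisVec k))
            + ∑ i, ∑ j, christoffel g ginv l i j (x t) * x' t i * x' t j)) →
        ∀ t₁ ∈ I, ∀ t₂ ∈ I,
          g (x t₁) (x' t₁) (x' t₁) = g (x t₂) (x' t₂) (x' t₂)) := by
  have hgU (q) (hq : q ∈ U) : ContDiffAt ℝ ∞ g q := hg.contDiffAt (hU.mem_nhds hq)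
  have henergy (x x' : ℝ → Fin n → ℝ) (t : ℝ) (hxt : x t ∈ U) (hx : HasDerivAt x (x' t) t)
      (hx' : HasDerivAt x' (newtonAccel g ginv α (x t) (x' t)) t) :
      HasDerivAt (fun s => g (x s) (x' s) (x' s)) (-(2 * α (x t, x' t) (x' t))) t :=
    hasDerivAt_energy_of_newton ((hgU _ hxt).differentiableAt (by simp)) (hsymm _ hxt)
      (hginv _ hxt) hx hx'
  constructor
  · intro hcontact I hIo hIc x x' x'' hxU hx hx' hN t₁ ht₁ t₂ ht₂
    have hderiv (t) (ht : t ∈ I) : HasDerivAt (fun s => g (x s) (x' s) (x' s)) 0 t := by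
      have hx'' : x'' t = newtonAccel g ginv α (x t) (x' t) := funext (hN t ht)
      simpa [hcontact _ (hxU t ht)] using henergy x x' t (hxU t ht) (hx t ht) (hx'' ▸ hx' t ht)
    exact hIo.is_const_of_deriv_eq_zero hIc.isPreconnected
      (fun t ht => (hderiv t ht).differentiableAt.differentiableWithinAt)
      (fun t ht => (hderiv t ht).deriv) ht₁ ht₂
  · intro hconst q hq v
    have hα' : ContDiffAt ℝ ∞ α (q, v) :=
      hα.contDiffAt ((hU.prod isOpen_univ).mem_nhds ⟨hq, Set.mem_univ v⟩)
    obtain ⟨ε, hε, x, x', hx0, hx'0, hsol⟩ := exists_second_order_solution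
      ((contDiffAt_newtonAccel (hgU q hq) (Filter.eventually_of_mem (hU.mem_nhds hq) hginv)
        hα').of_le (by simp)) (hU.mem_nhds hq)
    have h0 : (0 : ℝ) ∈ Set.Ioo (-ε) ε := ⟨by linarith, hε⟩
    have hflat : (fun s => g (x s) (x' s) (x' s)) =ᶠ[𝓝 0] fun _ => g (x 0) (x' 0) (x' 0) :=
      Filter.eventually_of_mem (isOpen_Ioo.mem_nhds h0) fun t ht =>
        hconst _ isOpen_Ioo Set.ordConnected_Ioo x x' _ (fun t ht => (hsol t ht).1)
          (fun t ht => (hsol t ht).2.1) (fun t ht => (hsol t ht).2.2) (fun _ _ _ => rfl) t ht 0 h0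
    have h := (henergy x x' 0 (hsol 0 h0).1 (hsol 0 h0).2.1 (hsol 0 h0).2.2).unique
      ((hasDerivAt_const 0 _).congr_of_eventuallyEq hflat)
    rw [hx0, hx'0] at h
    linarith

/-- A smooth horizontal 1-form `α` is a contact form if and only if every
twice-differentiable curve solving the Newton equation of the mechanical system `(U, g, α)`
has tangent field of constant length. (The converse direction uses local existence of
solutions through every initial condition, by Picard–Lindelöf.) -/
theorem contact_iff_constant_speed {n : ℕ} (U : Set (Fin n → ℝ)) (hU : IsOpen U)
    (g : (Fin n → ℝ) → ((Fin n → ℝ) →L[ℝ] (Fin n → ℝ) →L[ℝ] ℝ))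
    (hg : ContDiffOn ℝ (⊤ : ℕ∞) g U)
    (hsymm : ∀ q ∈ U, ∀ u w : Fin n → ℝ, g q u w = g q w u)
    (hnondeg : ∀ q ∈ U, ∀ u : Fin n → ℝ, (∀ w, g q u w = 0) → u = 0)
    (ginv : (Fin n → ℝ) → Fin n → Fin n → ℝ)
    (hginv : ∀ q ∈ U, ∀ i j : Fin n,
      (∑ k, g q (basisVec i) (basisVec k) * ginv q k j) = if i = j then 1 else 0)
    (α : (Fin n → ℝ) × (Fin n → ℝ) → ((Fin n → ℝ) →L[ℝ] ℝ))
    (hα : ContDiffOn ℝ (⊤ : ℕ∞) α (U ×ˢ (Set.univ : Set (Fin n → ℝ)))) :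
    (∀ (q : Fin n → ℝ), q ∈ U → ∀ v : Fin n → ℝ, α (q, v) v = 0)
    ↔
    (∀ (I : Set ℝ), IsOpen I → I.OrdConnected →
      ∀ x x' x'' : ℝ → (Fin n → ℝ),
        (∀ t ∈ I, x t ∈ U) →
        (∀ t ∈ I, HasDerivAt x (x' t) t) →
        (∀ t ∈ I, HasDerivAt x' (x'' t) t) →
        (∀ t ∈ I, ∀ l : Fin n,
          x'' t l = -((∑ k, ginv (x t) l k * α (x t, x' t) (basisVec k))
            + ∑ i, ∑ j, christoffel g ginv l i j (x t) * x' t i * x' t j)) →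
        ∀ t₁ ∈ I, ∀ t₂ ∈ I,
          g (x t₁) (x' t₁) (x' t₁) = g (x t₂) (x' t₂) (x' t₂)) :=
  contact_iff_constant_speed_general U hU g hg hsymm ginv hginv α hα
end
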